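/- Let k be even and G = G_0(u) ⋄ H(u) be a connected k-uniform hypergraph. If x is a first eigenvector of G, then α_H(x) := Σ_{e ∈ E_H(u)} Π_{v ∈ e} x_v ≤ 0. Moreover, if x_u ≠ 0 and x|_{G_0} ≠ 0, then α_H(x) < 0. -/

import Mathlib

open Finset BigOperators

variable {V : Type*}

/-- A `k`-uniform hypergraph given by its edge set: every edge has exactly `k` vertices. -/
def Uniform [DecidableEq V] (E : Finset (Finset V)) (k : ℕ) : Prop :=
  ∀ e ∈ E, e.card = k

/-- Two vertices are adjacent if some edge contains both. -/
def HAdj [DecidableEq V] (E : Finset (Finset V)) (a b : V) : Prop :=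
  a ≠ b ∧ ∃ e ∈ E, a ∈ e ∧ b ∈ e

/-- The hypergraph is connected: every two vertices are joined by a walk. -/
def HConnected [DecidableEq V] (E : Finset (Finset V)) : Prop :=
  ∀ a b : V, Relation.ReflTransGen (HAdj E) a b

/-- `(lam, x)` satisfies the H-eigen equations of the adjacency tensor:
for each vertex `v`, `∑_{e ∋ v} ∏_{w ∈ e \ {v}} x w = lam * (x v)^(k-1)`. -/
def isEig [Fintype V] [DecidableEq V] (E : Finset (Finset V)) (k : ℕ) (lam : ℝ) (x : V → ℝ) :
    Prop :=
  ∀ v : V, (∑ e ∈ E.filter (fun e => v ∈ e), ∏ w ∈ e.erase v, x w) = lam * x v ^ (k - 1)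

/-- The set of H-eigenvalues of the adjacency tensor of the hypergraph. -/
def specH [Fintype V] [DecidableEq V] (E : Finset (Finset V)) (k : ℕ) : Set ℝ :=
  {lam | ∃ x : V → ℝ, x ≠ 0 ∧ isEig E k lam x}

/-- The least H-eigenvalue of the adjacency tensor. -/
noncomputable def lamMin [Fintype V] [DecidableEq V] (E : Finset (Finset V)) (k : ℕ) : ℝ :=
  sInf (specH E k)

/-- A first eigenvector: a real eigenvector associated with the least H-eigenvalue. -/
def IsFirstEigvec [Fintype V] [DecidableEq V] (E : Finset (Finset V)) (k : ℕ) (x : V → ℝ) :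
    Prop :=
  x ≠ 0 ∧ isEig E k (lamMin E k) x

/-!
Write `Φ(z) = ∑_{e ∈ E} ∏_{v ∈ e} z v` and `N(z) = ∑_v (z v)^k`. For even `k`, `N` is positive
definite, and a Lagrange-multiplier argument at a minimiser of `Φ` on the sphere `N = 1` shows
`λ_min(G) = min k Φ / N`, i.e. `k Φ(z) - λ_min N(z) ≥ 0` for every `z`.

Test this with `z_s`, equal to `x` on `G₀`, to `s` on `e* \ {u}` for an edge `e* ∈ E_H(u)` (which
exists by connectivity) and to `0` elsewhere on `H`; among the edges of `H` only `e*` survives.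
Summing the eigen-equations of `x` over `G₀` turns the inequality into
`α_H(x) + λ_min (k - 1) s^k ≤ k x_u s^(k-1)` for all real `s`. At `s = 0` this is `α_H(x) ≤ 0`; if
`α_H(x) = 0`, the odd leading term `s^(k-1)` forces `x_u = 0`.
-/

open Filter Topology

def edgeForm (E : Finset (Finset V)) (z : V → ℝ) : ℝ :=
  ∑ e ∈ E, ∏ v ∈ e, z v

def powSum [Fintype V] (k : ℕ) (z : V → ℝ) : ℝ :=
  ∑ v, z v ^ k

lemma nonneg_of_forall_pos_mul_le {c d : ℝ} (h : ∀ t > 0, d * t ≤ c) : 0 ≤ c := by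
  have hlim : Tendsto (fun t => d * t) (𝓝[>] 0) (𝓝 0) := by
    simpa using ((continuous_const_mul d).tendsto 0).mono_left nhdsWithin_le_nhds
  exact le_of_tendsto hlim (eventually_nhdsWithin_of_forall h)

lemma nonpos_and_eq_zero_of_forall_add_mul_pow_le {a c d : ℝ} {k : ℕ} (hk : Even k) (hk0 : 0 < k)
    (h : ∀ s : ℝ, a + d * s ^ k ≤ c * s ^ (k - 1)) : a ≤ 0 ∧ (a = 0 → c = 0) := by
  have hk1 : k - 1 ≠ 0 := by obtain ⟨m, rfl⟩ := hk; omega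
  have hsplit : ∀ t : ℝ, t ^ k = t * t ^ (k - 1) := fun t => by
    rw [← pow_succ']; congr 1; omega
  refine ⟨by simpa [hk0.ne', hk1] using h 0, fun ha => ?_⟩
  have hpos : ∀ t > 0, d * t ≤ c := fun t ht => by
    have := h t
    rw [ha, zero_add, hsplit, ← mul_assoc] at this
    exact le_of_mul_le_mul_right this (pow_pos ht _)
  have hneg : ∀ t > 0, d * t ≤ -c := fun t ht => by
    have := h (-t)
    rw [ha, zero_add, hk.neg_pow, (Nat.Even.sub_odd hk0 hk odd_one).neg_pow, hsplit,
      ← mul_assoc, mul_neg, ← neg_mul] at this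
    exact le_of_mul_le_mul_right this (pow_pos ht _)
  linarith [nonneg_of_forall_pos_mul_le hpos, nonneg_of_forall_pos_mul_le hneg]

section Variational

variable {E : Finset (Finset V)} {k : ℕ}

lemma sum_mul_sum_prod_erase [DecidableEq V] (E : Finset (Finset V)) (T : Finset V) (z : V → ℝ) :
    ∑ v ∈ T, z v * ∑ e ∈ E with v ∈ e, ∏ w ∈ e.erase v, z w
      = ∑ e ∈ E, ((e ∩ T).card : ℝ) * ∏ v ∈ e, z v := by
  have hterm : ∀ v, z v * ∑ e ∈ E with v ∈ e, ∏ w ∈ e.erase v, z w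
      = ∑ e ∈ E, if v ∈ e then ∏ w ∈ e, z w else 0 := fun v => by
    rw [mul_sum, sum_filter]
    refine sum_congr rfl fun e _ => ?_
    split_ifs with hv
    · rw [mul_prod_erase e z hv]
    · rfl
  simp_rw [hterm]
  rw [sum_comm]
  refine sum_congr rfl fun e _ => ?_
  rw [sum_ite_mem, sum_const, inter_comm, nsmul_eq_mul]

lemma isEig.mul_sum_pow_eq [Fintype V] [DecidableEq V] {lam : ℝ} {z : V → ℝ} (hz : isEig E k lam z) (hk0 : 0 < k)
    (T : Finset V) :
    lam * ∑ v ∈ T, z v ^ k = ∑ e ∈ E, ((e ∩ T).card : ℝ) * ∏ v ∈ e, z v := by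
  rw [← sum_mul_sum_prod_erase, mul_sum]
  refine sum_congr rfl fun v _ => ?_
  rw [hz v, mul_left_comm, ← pow_succ', Nat.sub_add_cancel hk0]

lemma isEig.mul_powSum_eq [Fintype V] [DecidableEq V] (hU : Uniform E k) {lam : ℝ} {z : V → ℝ} (hz : isEig E k lam z)
    (hk0 : 0 < k) : lam * powSum k z = k * edgeForm E z := by
  rw [powSum, hz.mul_sum_pow_eq hk0, edgeForm, mul_sum]
  exact sum_congr rfl fun e he => by rw [inter_univ, hU e he]

lemma powSum_pos [Fintype V] (hk : Even k) {z : V → ℝ} (hz : z ≠ 0) : 0 < powSum k z := by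
  obtain ⟨v, hv⟩ := Function.ne_iff.mp hz
  exact sum_pos' (fun w _ => hk.pow_nonneg _) ⟨v, mem_univ v, hk.pow_pos hv⟩

lemma powSum_smul [Fintype V] (k : ℕ) (c : ℝ) (z : V → ℝ) : powSum k (c • z) = c ^ k * powSum k z := by
  simp only [powSum, Pi.smul_apply, smul_eq_mul, mul_pow, mul_sum]

lemma edgeForm_smul [DecidableEq V] (hU : Uniform E k) (c : ℝ) (z : V → ℝ) :
    edgeForm E (c • z) = c ^ k * edgeForm E z := by
  rw [edgeForm, edgeForm, mul_sum]
  refine sum_congr rfl fun e he => ?_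
  simp only [Pi.smul_apply, smul_eq_mul, prod_mul_distrib, prod_const, hU e he]

lemma isCompact_powSum_eq_one [Fintype V] (hk : Even k) (hk0 : 0 < k) :
    IsCompact {z : V → ℝ | powSum k z = 1} := by
  have hcont : Continuous (powSum (V := V) k) :=
    continuous_finsetSum _ fun v _ => (continuous_apply v).pow k
  refine Metric.isCompact_of_isClosed_isBounded (isClosed_eq hcont continuous_const)
    ((Metric.isBounded_closedBall (x := 0) (r := 1)).subset fun z hz => ?_)
  rw [mem_closedBall_zero_iff, pi_norm_le_iff_of_nonneg zero_le_one]
  intro v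
  rw [Real.norm_eq_abs, ← pow_le_one_iff_of_nonneg (abs_nonneg _) hk0.ne', hk.pow_abs, ← hz.out]
  exact single_le_sum (f := fun v => z v ^ k) (fun w _ => hk.pow_nonneg _) (mem_univ v)

lemma exists_isMinOn_edgeForm [Fintype V] [Nonempty V] (E : Finset (Finset V)) (hk : Even k) (hk0 : 0 < k) :
    ∃ z₀, powSum k z₀ = 1 ∧ IsMinOn (edgeForm E) {z | powSum k z = 1} z₀ := by
  classical
  have hne : powSum k (Pi.single (Classical.arbitrary V) (1 : ℝ)) = 1 := by
    simp [powSum, Pi.single_apply, zero_pow hk0.ne']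
  have hcont : Continuous (edgeForm (V := V) E) :=
    continuous_finsetSum _ fun e _ => continuous_finsetProd _ fun v _ => continuous_apply v
  exact (isCompact_powSum_eq_one hk hk0).exists_isMinOn ⟨_, hne⟩ hcont.continuousOn

lemma sum_smul_proj_apply_single [Fintype V] [DecidableEq V] (g : V → ℝ) (w : V) :
    (∑ v, g v • ContinuousLinearMap.proj (R := ℝ) (φ := fun _ : V => ℝ) v) (Pi.single w 1)
      = g w := by
  simp [Pi.single_apply]

lemma hasStrictFDerivAt_powSum [Fintype V] (k : ℕ) (z : V → ℝ) :
    HasStrictFDerivAt (powSum k)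
      (∑ v, ((k : ℝ) * z v ^ (k - 1)) • ContinuousLinearMap.proj (R := ℝ) (φ := fun _ => ℝ) v)
      z :=
  HasStrictFDerivAt.fun_sum fun v _ =>
    (hasStrictDerivAt_pow k (z v)).comp_hasStrictFDerivAt z (hasStrictFDerivAt_apply v z)

lemma hasStrictFDerivAt_edgeForm [Fintype V] [DecidableEq V] (E : Finset (Finset V)) (z : V → ℝ) :
    HasStrictFDerivAt (edgeForm E)
      (∑ v, (∑ e ∈ E with v ∈ e, ∏ w ∈ e.erase v, z w) •
        ContinuousLinearMap.proj (R := ℝ) (φ := fun _ => ℝ) v) z := by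
  have h := HasStrictFDerivAt.fun_sum (u := E) fun e _ =>
    HasStrictFDerivAt.finsetProd (u := e) fun v _ => hasStrictFDerivAt_apply (𝕜 := ℝ) v z
  simp_rw [sum_smul]
  rwa [sum_comm' (t' := univ) (s' := fun v => E.filter (v ∈ ·)) (by simp)] at h

lemma isEig_of_isMinOn [Fintype V] [DecidableEq V] (hU : Uniform E k) (hk0 : 0 < k) {z₀ : V → ℝ} (h1 : powSum k z₀ = 1)
    (hmin : IsMinOn (edgeForm E) {z | powSum k z = 1} z₀) :
    isEig E k (k * edgeForm E z₀) z₀ := by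
  have hextr : IsLocalExtrOn (edgeForm E) {z | powSum k z = powSum k z₀} z₀ := by
    rw [h1]; exact hmin.localize.isExtr
  obtain ⟨a, b, hab, hsum⟩ := hextr.exists_multipliers_of_hasStrictFDerivAt_1d
    (hasStrictFDerivAt_powSum k z₀) (hasStrictFDerivAt_edgeForm E z₀)
  have hcoord : ∀ v, a * (k * z₀ v ^ (k - 1))
      + b * ∑ e ∈ E with v ∈ e, ∏ w ∈ e.erase v, z₀ w = 0 := fun v => by
    simpa only [add_apply, smul_apply, zero_apply,
      sum_smul_proj_apply_single, smul_eq_mul] using congrArg (· (Pi.single v 1)) hsum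
  have hz₀ : z₀ ≠ 0 := by
    rintro rfl; simp [powSum, zero_pow hk0.ne'] at h1
  have hb : b ≠ 0 := by
    rintro rfl
    have ha : a ≠ 0 := fun ha => hab (by rw [ha]; rfl)
    refine hz₀ (funext fun v => ?_)
    have := hcoord v
    simp only [zero_mul, add_zero, mul_eq_zero, Nat.cast_eq_zero, hk0.ne', false_or, ha] at this
    exact eq_zero_of_pow_eq_zero this
  have heig : isEig E k (-(a * k / b)) z₀ := fun v => by
    have := hcoord v
    field_simp
    linarith
  have := heig.mul_powSum_eq hU hk0
  rw [h1, mul_one] at this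
  rwa [← this]

lemma mul_powSum_le_of_isMinOn [Fintype V] [DecidableEq V] (hU : Uniform E k) (hk : Even k) (hk0 : 0 < k) {z₀ : V → ℝ}
    (hmin : IsMinOn (edgeForm E) {z | powSum k z = 1} z₀) (w : V → ℝ) :
    edgeForm E z₀ * powSum k w ≤ edgeForm E w := by
  rcases eq_or_ne w 0 with rfl | hw
  · have h0 : edgeForm E 0 = 0 := by simpa [zero_pow hk0.ne'] using edgeForm_smul hU 0 (0 : V → ℝ)
    simp [powSum, zero_pow hk0.ne', h0]
  have hN := powSum_pos hk hw
  set c := powSum k w ^ (k : ℝ)⁻¹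
  have hck : c ^ k = powSum k w := Real.rpow_inv_natCast_pow hN.le hk0.ne'
  have hc : powSum k (c⁻¹ • w) = 1 := by
    rw [powSum_smul, inv_pow, hck, inv_mul_cancel₀ hN.ne']
  have := hmin hc
  rw [Set.mem_ofPred_eq, edgeForm_smul hU, inv_pow, hck] at this
  rwa [← le_inv_mul_iff₀' hN]

lemma lamMin_mul_powSum_le [Fintype V] [DecidableEq V] [Nonempty V] (hU : Uniform E k) (hk : Even k) (hk0 : 0 < k)
    (z : V → ℝ) : lamMin E k * powSum k z ≤ k * edgeForm E z := by
  obtain ⟨z₀, h1, hmin⟩ := exists_isMinOn_edgeForm E hk hk0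
  have hleast : IsLeast (specH E k) (k * edgeForm E z₀) := by
    refine ⟨⟨z₀, fun h => by simp [h, powSum, zero_pow hk0.ne'] at h1,
      isEig_of_isMinOn hU hk0 h1 hmin⟩, ?_⟩
    rintro lam ⟨w, hw, hweig⟩
    have hN := powSum_pos hk hw
    refine le_of_mul_le_mul_right ?_ hN
    rw [hweig.mul_powSum_eq hU hk0, mul_assoc]
    exact mul_le_mul_of_nonneg_left (mul_powSum_le_of_isMinOn hU hk hk0 hmin w) (Nat.cast_nonneg k)
  rw [lamMin, hleast.csInf_eq, mul_assoc]
  exact mul_le_mul_of_nonneg_left (mul_powSum_le_of_isMinOn hU hk hk0 hmin z) (Nat.cast_nonneg k)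

end Variational

section Coalescence

variable [DecidableEq V] {V0 VH : Finset V} {u : V} {E0 EH : Finset (Finset V)} {k : ℕ}

lemma mem_left_of_inter_eq_singleton (hI : V0 ∩ VH = {u}) : u ∈ V0 :=
  (mem_inter.mp (hI ▸ mem_singleton_self u)).1

lemma eq_of_inter_eq_singleton (hI : V0 ∩ VH = {u}) {v : V} (h0 : v ∈ V0) (hH : v ∈ VH) :
    v = u :=
  mem_singleton.mp (hI ▸ mem_inter.mpr ⟨h0, hH⟩)

lemma inter_eq_inter_singleton (hI : V0 ∩ VH = {u}) {e : Finset V} (he : e ⊆ VH) :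
    e ∩ V0 = e ∩ {u} := by
  calc e ∩ V0 = e ∩ VH ∩ V0 := by rw [inter_eq_left.mpr he]
    _ = e ∩ {u} := by rw [inter_assoc, inter_comm VH, hI]

lemma disjoint_erase_of_subset (hI : V0 ∩ VH = {u}) {e : Finset V} (he : e ⊆ VH) :
    Disjoint V0 (e.erase u) :=
  disjoint_left.mpr fun _ h0 hv =>
    ne_of_mem_erase hv (eq_of_inter_eq_singleton hI h0 (he (mem_of_mem_erase hv)))

lemma disjoint_of_uniform (hI : V0 ∩ VH = {u}) (hE0 : ∀ e ∈ E0, e ⊆ V0)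
    (hEH : ∀ e ∈ EH, e ⊆ VH) (hU : Uniform (E0 ∪ EH) k) (hk : 1 < k) : Disjoint E0 EH := by
  refine disjoint_left.mpr fun e he0 heH => ?_
  have := card_le_card (hI ▸ subset_inter (hE0 e he0) (hEH e heH))
  rw [hU e (mem_union_left _ he0), card_singleton] at this
  omega

lemma exists_mem_of_connected (hI : V0 ∩ VH = {u}) (hE0 : ∀ e ∈ E0, e ⊆ V0)
    (hEH : ∀ e ∈ EH, e ⊆ VH) (hU : Uniform (E0 ∪ EH) k) (hk : 1 < k)
    (hconn : HConnected (E0 ∪ EH)) (hEHne : EH.Nonempty) : ∃ e ∈ EH, u ∈ e := by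
  by_contra! hno
  -- without an edge of `H` at `u`, every walk from `u` stays in `G₀`
  have hreach : ∀ b, Relation.ReflTransGen (HAdj (E0 ∪ EH)) u b → b ∈ V0 := by
    intro b hb
    induction hb with
    | refl => exact mem_left_of_inter_eq_singleton hI
    | tail _ hstep ih =>
      obtain ⟨-, e, he, hce, hbe⟩ := hstep
      rcases mem_union.mp he with he0 | heH
      · exact hE0 e he0 hbe
      · exact absurd (eq_of_inter_eq_singleton hI ih (hEH e heH hce) ▸ hce) (hno e heH)
  obtain ⟨e, he⟩ := hEHne
  obtain ⟨w, hwe, hwu⟩ := exists_mem_ne (by rwa [hU e (mem_union_right _ he)]) u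
  exact hwu (eq_of_inter_eq_singleton hI (hreach w (hconn u w)) (hEH e he hwe))

lemma isEig.mul_sum_pow_eq_add [Fintype V] (hI : V0 ∩ VH = {u}) (hE0 : ∀ e ∈ E0, e ⊆ V0)
    (hEH : ∀ e ∈ EH, e ⊆ VH) (hU : Uniform (E0 ∪ EH) k) (hdisj : Disjoint E0 EH) (hk0 : 0 < k)
    {lam : ℝ} {x : V → ℝ} (hx : isEig (E0 ∪ EH) k lam x) :
    lam * ∑ v ∈ V0, x v ^ k = k * edgeForm E0 x + ∑ e ∈ EH with u ∈ e, ∏ v ∈ e, x v := by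
  rw [hx.mul_sum_pow_eq hk0, sum_union hdisj, edgeForm, mul_sum, sum_filter]
  congr 1
  · refine sum_congr rfl fun e he => ?_
    rw [inter_eq_left.mpr (hE0 e he), hU e (mem_union_left _ he)]
  · refine sum_congr rfl fun e he => ?_
    rw [inter_eq_inter_singleton hI (hEH e he), inter_singleton]
    split_ifs <;> simp

def extendConst (V0 : Finset V) (x : V → ℝ) (T : Finset V) (s : ℝ) (v : V) : ℝ :=
  if v ∈ V0 then x v else if v ∈ T then s else 0

lemma powSum_extendConst [Fintype V] (hk0 : 0 < k) {T : Finset V} (hT : Disjoint V0 T)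
    (x : V → ℝ) (s : ℝ) :
    powSum k (extendConst V0 x T s) = ∑ v ∈ V0, x v ^ k + T.card * s ^ k := by
  have hpow : ∀ v, extendConst V0 x T s v ^ k
      = (if v ∈ V0 then x v ^ k else 0) + (if v ∈ T then s ^ k else 0) := fun v => by
    by_cases h0 : v ∈ V0
    · simp [extendConst, h0, disjoint_left.mp hT h0]
    · by_cases hT : v ∈ T <;> simp [extendConst, h0, hT, hk0.ne']
  simp only [powSum, hpow, sum_add_distrib, sum_ite_mem, univ_inter, sum_const, nsmul_eq_mul]

lemma edgeForm_extendConst (hI : V0 ∩ VH = {u}) (hE0 : ∀ e ∈ E0, e ⊆ V0)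
    (hEH : ∀ e ∈ EH, e ⊆ VH) (hU : Uniform (E0 ∪ EH) k) (hdisj : Disjoint E0 EH)
    {e₁ : Finset V} (he₁ : e₁ ∈ EH) (hu : u ∈ e₁) (x : V → ℝ) (s : ℝ) :
    edgeForm (E0 ∪ EH) (extendConst V0 x (e₁.erase u) s) = edgeForm E0 x + x u * s ^ (k - 1) := by
  have hoff : ∀ v ∈ VH, v ∉ e₁.erase u → v ≠ u → extendConst V0 x (e₁.erase u) s v = 0 :=
    fun v hv hv₁ hvu => by
      have hv0 : v ∉ V0 := fun h0 => hvu (eq_of_inter_eq_singleton hI h0 hv)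
      simp [extendConst, hv₁, hv0]
  rw [edgeForm, sum_union hdisj]
  congr 1
  · exact sum_congr rfl fun e he => prod_congr rfl fun v hv => if_pos (hE0 e he hv)
  rw [sum_eq_single_of_mem e₁ he₁]
  · rw [← mul_prod_erase _ _ hu, prod_congr rfl fun v hv => ?_, prod_const,
      card_erase_of_mem hu, hU e₁ (mem_union_right _ he₁)]
    · exact congrArg (· * _) (if_pos (mem_left_of_inter_eq_singleton hI))
    · exact (if_neg (disjoint_right.mp (disjoint_erase_of_subset hI (hEH e₁ he₁)) hv)).trans
        (if_pos hv)
  · intro e he hne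
    obtain ⟨v, hve, hv₁⟩ := not_subset.mp fun hsub => hne (eq_of_subset_of_card_le hsub
      (by rw [hU e (mem_union_right _ he), hU e₁ (mem_union_right _ he₁)]))
    exact prod_eq_zero hve (hoff v (hEH e he hve) (fun h => hv₁ (mem_of_mem_erase h))
      (fun h => hv₁ (h ▸ hu)))

end Coalescence

theorem stmt10_general [Fintype V] [DecidableEq V]
    (V0 VH : Finset V) (u : V) (E0 EH : Finset (Finset V)) (k : ℕ)
    (hk : Even k) (hk0 : 0 < k)
    (hI : V0 ∩ VH = {u})
    (hE0 : ∀ e ∈ E0, e ⊆ V0) (hEH : ∀ e ∈ EH, e ⊆ VH)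
    (hU : Uniform (E0 ∪ EH) k) (hconn : HConnected (E0 ∪ EH))
    (hEHne : EH.Nonempty)
    (x : V → ℝ) (hx : IsFirstEigvec (E0 ∪ EH) k x) :
    (∑ e ∈ EH.filter (fun e => u ∈ e), ∏ v ∈ e, x v) ≤ 0 ∧
    (x u ≠ 0 → (∃ v ∈ V0, x v ≠ 0) →
      (∑ e ∈ EH.filter (fun e => u ∈ e), ∏ v ∈ e, x v) < 0) := by
  have : Nonempty V := ⟨u⟩
  have hk1 : 1 < k := by obtain ⟨m, rfl⟩ := hk; omega
  have hdisj := disjoint_of_uniform hI hE0 hEH hU hk1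
  obtain ⟨e, he, hue⟩ := exists_mem_of_connected hI hE0 hEH hU hk1 hconn hEHne
  have hsum := hx.2.mul_sum_pow_eq_add hI hE0 hEH hU hdisj hk0
  have hperturb : ∀ s : ℝ, (∑ e ∈ EH with u ∈ e, ∏ v ∈ e, x v) + lamMin (E0 ∪ EH) k * (k - 1) * s ^ k
      ≤ k * x u * s ^ (k - 1) := fun s => by
    have := lamMin_mul_powSum_le hU hk hk0 (extendConst V0 x (e.erase u) s)
    rw [powSum_extendConst hk0 (disjoint_erase_of_subset hI (hEH e he)),
      edgeForm_extendConst hI hE0 hEH hU hdisj he hue, card_erase_of_mem hue,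
      hU e (mem_union_right _ he), Nat.cast_sub (show 1 ≤ k from hk0), Nat.cast_one] at this
    linarith
  obtain ⟨hα, hα0⟩ := nonpos_and_eq_zero_of_forall_add_mul_pow_le hk hk0 hperturb
  refine ⟨hα, fun hxu _ => hα.lt_of_ne fun h => hxu ?_⟩
  simpa [hk0.ne'] using hα0 h

/-- If `x` is a first eigenvector of `G = G₀(u) ⋄ H(u)`, then `α_H(x) = ∑_{e ∈ E_H(u)} ∏_{v ∈ e} x v ≤ 0`; if moreover `x u ≠ 0` and `x|_{G₀} ≠ 0` then `α_H(x) < 0`. -/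
theorem stmt10 [Fintype V] [DecidableEq V]
    (V0 VH : Finset V) (u : V) (E0 EH : Finset (Finset V)) (k : ℕ)
    (hk : Even k) (hk0 : 0 < k)
    (hI : V0 ∩ VH = {u}) (hcover : V0 ∪ VH = Finset.univ)
    (hE0 : ∀ e ∈ E0, e ⊆ V0) (hEH : ∀ e ∈ EH, e ⊆ VH)
    (hU : Uniform (E0 ∪ EH) k) (hconn : HConnected (E0 ∪ EH))
    (hE0ne : E0.Nonempty) (hEHne : EH.Nonempty)
    (x : V → ℝ) (hx : IsFirstEigvec (E0 ∪ EH) k x) :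
    (∑ e ∈ EH.filter (fun e => u ∈ e), ∏ v ∈ e, x v) ≤ 0 ∧
    (x u ≠ 0 → (∃ v ∈ V0, x v ≠ 0) →
      (∑ e ∈ EH.filter (fun e => u ∈ e), ∏ v ∈ e, x v) < 0) :=
  stmt10_general V0 VH u E0 EH k hk hk0 hI hE0 hEH hU hconn hEHne x hx
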